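/- There exists an absolute constant C > 0 such that the following holds. Let G=(V,E) be a finite simple graph on n vertices in which every vertex has degree at least 1 and whose conductance satisfies φ_G > 0. Then the bipartiteness ratio of G satisfies β_G ≤ C · (2 − λ_n)/φ_G, where λ_n is the largest eigenvalue of the normalized Laplacian of G. -/
import Mathlib


open scoped Classical
open Matrix

noncomputable section

namespace Sublinear

variable {V : Type*}

/-- The degree `d(v)` of a vertex, as a real number. -/
def deg [Fintype V] (G : SimpleGraph V) (v : V) : ℝ :=
  ((Finset.univ.filter fun u => G.Adj v u).card : ℝ)

/-- The volume `μ_G(S)` of a set of vertices. -/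
def vol [Fintype V] (G : SimpleGraph V) (S : Set V) : ℝ :=
  ∑ v ∈ Finset.univ.filter (fun v => v ∈ S), deg G v

/-- The number of ordered adjacent pairs `(u,v)` with `u ∈ S`, `v ∈ T`.
For disjoint `S`, `T` this equals the number `e_G(S,T)` of edges between `S` and `T`. -/
def eB [Fintype V] (G : SimpleGraph V) (S T : Set V) : ℝ :=
  (((Finset.univ : Finset (V × V)).filter
      fun p => p.1 ∈ S ∧ p.2 ∈ T ∧ G.Adj p.1 p.2).card : ℝ)

/-- The number `e_G(S)` of edges with both endpoints in `S`. -/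
def eIn [Fintype V] (G : SimpleGraph V) (S : Set V) : ℝ := eB G S S / 2

/-- The conductance `φ_G(S)` of a set of vertices. -/
def cond [Fintype V] (G : SimpleGraph V) (S : Set V) : ℝ :=
  eB G S Sᶜ / vol G S

/-- The conductance `φ_G` of the graph: the minimum of `φ_G(S)` over nonempty `S`
with `μ_G(S) ≤ μ_G/2`. -/
def conductance [Fintype V] (G : SimpleGraph V) : ℝ :=
  sInf {x | ∃ S : Set V, S.Nonempty ∧ vol G S ≤ vol G Set.univ / 2 ∧ x = cond G S}

/-- The bipartiteness ratio `β_G(L,R)` of a pair of disjoint sets. -/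
def bipRatio [Fintype V] (G : SimpleGraph V) (L R : Set V) : ℝ :=
  (2 * eIn G L + 2 * eIn G R + eB G (L ∪ R) (L ∪ R)ᶜ) / vol G (L ∪ R)

/-- The bipartiteness ratio `β_G(S)` of a set: the minimum of `β_G(L,R)` over
partitions `(L,R)` of `S`. -/
def bipS [Fintype V] (G : SimpleGraph V) (S : Set V) : ℝ :=
  sInf {x | ∃ L R : Set V, Disjoint L R ∧ L ∪ R = S ∧ x = bipRatio G L R}

/-- The bipartiteness ratio `β_G` of the graph: the minimum of `β_G(S)` over
nonempty sets `S`. -/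
def bip [Fintype V] (G : SimpleGraph V) : ℝ :=
  sInf {x | ∃ S : Set V, S.Nonempty ∧ x = bipS G S}

/-- The maximum cut value `MC(G)`: the maximum over sets `S` of the fraction of
edges cut by the bipartition `(S, Sᶜ)`. -/
def maxCut [Fintype V] (G : SimpleGraph V) : ℝ :=
  sSup {x | ∃ S : Set V, x = eB G S Sᶜ / eIn G Set.univ}

/-- The adjacency matrix `A` of `G`, with real entries. -/
def adjMat [Fintype V] (G : SimpleGraph V) : Matrix V V ℝ :=
  Matrix.of fun u v => if G.Adj u v then (1 : ℝ) else 0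

/-- The diagonal matrix `D⁻¹` of inverse degrees. -/
def degInv [Fintype V] [DecidableEq V] (G : SimpleGraph V) : Matrix V V ℝ :=
  Matrix.diagonal fun v => (deg G v)⁻¹

/-- The diagonal matrix `D^{-1/2}` of inverse square roots of degrees. -/
def degInvSqrt [Fintype V] [DecidableEq V] (G : SimpleGraph V) : Matrix V V ℝ :=
  Matrix.diagonal fun v => (Real.sqrt (deg G v))⁻¹

/-- The normalized Laplacian `𝓛 = I - D^{-1/2} A D^{-1/2}` of `G`. -/
def normLap [Fintype V] [DecidableEq V] (G : SimpleGraph V) : Matrix V V ℝ :=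
  1 - degInvSqrt G * adjMat G * degInvSqrt G

/-- The lazy random walk matrix `W = (I + D⁻¹ A)/2` of `G`. -/
def lazyW [Fintype V] [DecidableEq V] (G : SimpleGraph V) : Matrix V V ℝ :=
  ((1 : ℝ) / 2) • (1 + degInv G * adjMat G)

/-- The matrix `M = I - W = (I - D⁻¹ A)/2`. -/
def walkM [Fintype V] [DecidableEq V] (G : SimpleGraph V) : Matrix V V ℝ :=
  ((1 : ℝ) / 2) • (1 - degInv G * adjMat G)

/-- The indicator row vector `1_v` of a vertex `v`. -/
def indVec (v : V) : V → ℝ := fun u => if u = v then 1 else 0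

/-- `t` is an eigenvalue of the matrix `M`. -/
def IsEigenvalue [Fintype V] (M : Matrix V V ℝ) (t : ℝ) : Prop :=
  ∃ x : V → ℝ, x ≠ 0 ∧ M *ᵥ x = t • x


open Finset

section Basics

variable [Fintype V] (G : SimpleGraph V)

/-- The finset of ordered adjacent pairs. -/
def pairs : Finset (V × V) :=
  Finset.univ.filter fun p => G.Adj p.1 p.2

lemma deg_nonneg (v : V) : 0 ≤ deg G v := Nat.cast_nonneg _

lemma sum_pairs_fst (f : V → ℝ) :
    ∑ p ∈ pairs G, f p.1 = ∑ v, deg G v * f v := by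
  classical
  rw [pairs, Finset.sum_filter, Fintype.sum_prod_type]
  refine Finset.sum_congr rfl fun v _ => ?_
  rw [deg, Finset.card_filter]
  push_cast
  rw [Finset.sum_mul]
  refine Finset.sum_congr rfl fun u _ => ?_
  by_cases h : G.Adj v u <;> simp [h]

lemma sum_pairs_swap (F : V → V → ℝ) :
    ∑ p ∈ pairs G, F p.1 p.2 = ∑ p ∈ pairs G, F p.2 p.1 := by
  classical
  apply Finset.sum_nbij' (fun p => (p.2, p.1)) (fun p => (p.2, p.1)) <;>
    simp [pairs, SimpleGraph.adj_comm]

lemma sum_pairs_snd (f : V → ℝ) :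
    ∑ p ∈ pairs G, f p.2 = ∑ v, deg G v * f v := by
  rw [sum_pairs_swap G (fun a b => f b)]; exact sum_pairs_fst G f

lemma eB_eq_sum (S T : Set V) :
    eB G S T = ∑ p ∈ pairs G, (if p.1 ∈ S ∧ p.2 ∈ T then (1:ℝ) else 0) := by
  classical
  rw [eB, pairs, Finset.sum_filter]
  rw [Finset.card_filter]
  push_cast
  refine Finset.sum_congr rfl fun p _ => ?_
  by_cases h1 : p.1 ∈ S <;> by_cases h2 : p.2 ∈ T <;> by_cases h3 : G.Adj p.1 p.2 <;> simp [h1, h2, h3]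

lemma vol_eq_sum (S : Set V) :
    vol G S = ∑ v, deg G v * (if v ∈ S then (1:ℝ) else 0) := by
  classical
  rw [vol, Finset.sum_filter]
  refine Finset.sum_congr rfl fun v _ => ?_
  by_cases h : v ∈ S <;> simp [h]

lemma vol_nonneg (S : Set V) : 0 ≤ vol G S :=
  Finset.sum_nonneg fun v _ => deg_nonneg G v

lemma eB_nonneg (S T : Set V) : 0 ≤ eB G S T := Nat.cast_nonneg _

lemma vol_congr {S T : Set V} (h : S = T) : vol G S = vol G T := by rw [h]

lemma vol_mono {S T : Set V} (h : S ⊆ T) : vol G S ≤ vol G T := by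
  rw [vol_eq_sum, vol_eq_sum]
  refine Finset.sum_le_sum fun v _ => ?_
  by_cases hv : v ∈ S
  · simp [hv, h hv]
  · by_cases hv2 : v ∈ T <;> simp [hv, hv2, deg_nonneg]

lemma vol_add_compl (S : Set V) : vol G S + vol G Sᶜ = vol G Set.univ := by
  classical
  rw [vol_eq_sum, vol_eq_sum, vol_eq_sum, ← Finset.sum_add_distrib]
  refine Finset.sum_congr rfl fun v _ => ?_
  by_cases h : v ∈ S <;> simp [h]

lemma vol_pos (hdeg : ∀ v, 1 ≤ deg G v) {S : Set V} (hS : S.Nonempty) :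
    0 < vol G S := by
  classical
  obtain ⟨v, hv⟩ := hS
  rw [vol_eq_sum]
  have : (0:ℝ) < deg G v * (if v ∈ S then (1:ℝ) else 0) := by
    simp [hv]; linarith [hdeg v]
  refine Finset.sum_pos' (fun u _ => ?_) ⟨v, Finset.mem_univ v, this⟩
  by_cases h : u ∈ S <;> simp [h, deg_nonneg]

end Basics

section InfFacts

variable [Fintype V] (G : SimpleGraph V)

lemma cond_nonneg (S : Set V) : 0 ≤ cond G S :=
  div_nonneg (eB_nonneg G _ _) (vol_nonneg G _)

lemma conductance_le_cond {S : Set V} (hS : S.Nonempty)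
    (hvol : vol G S ≤ vol G Set.univ / 2) : conductance G ≤ cond G S := by
  apply csInf_le
  · exact ⟨0, fun x ⟨S', _, _, hx⟩ => hx ▸ cond_nonneg G S'⟩
  · exact ⟨S, hS, hvol, rfl⟩

lemma conductance_nonneg : 0 ≤ conductance G := by
  rcases Set.eq_empty_or_nonempty
      {x | ∃ S : Set V, S.Nonempty ∧ vol G S ≤ vol G Set.univ / 2 ∧ x = cond G S} with h | h
  · rw [conductance, h, Real.sInf_empty]
  · exact le_csInf h fun x ⟨S', _, _, hx⟩ => hx ▸ cond_nonneg G S'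

lemma bipRatio_nonneg (L R : Set V) : 0 ≤ bipRatio G L R := by
  apply div_nonneg _ (vol_nonneg G _)
  have h1 := eB_nonneg G L L
  have h2 := eB_nonneg G R R
  have h3 := eB_nonneg G (L ∪ R) (L ∪ R)ᶜ
  rw [eIn, eIn]; linarith

lemma bip_le_bipRatio {L R : Set V} (hdisj : Disjoint L R)
    (hne : (L ∪ R).Nonempty) : bip G ≤ bipRatio G L R := by
  have hbS : ∀ S : Set V, 0 ≤ bipS G S := by
    intro S
    rcases Set.eq_empty_or_nonempty
        {x | ∃ L R : Set V, Disjoint L R ∧ L ∪ R = S ∧ x = bipRatio G L R} with h | h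
    · rw [bipS, h, Real.sInf_empty]
    · exact le_csInf h fun x ⟨L', R', _, _, hx⟩ => hx ▸ bipRatio_nonneg G L' R'
  have h1 : bip G ≤ bipS G (L ∪ R) := by
    apply csInf_le
    · exact ⟨0, fun x ⟨S', _, hx⟩ => hx ▸ hbS S'⟩
    · exact ⟨L ∪ R, hne, rfl⟩
  have h2 : bipS G (L ∪ R) ≤ bipRatio G L R := by
    apply csInf_le
    · exact ⟨0, fun x ⟨L', R', _, _, hx⟩ => hx ▸ bipRatio_nonneg G L' R'⟩
    · exact ⟨L, R, hdisj, rfl, rfl⟩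
  linarith

lemma nonempty_of_conductance_pos (hφ : 0 < conductance G) : Nonempty V := by
  by_contra h
  rw [not_nonempty_iff] at h
  have : {x | ∃ S : Set V, S.Nonempty ∧ vol G S ≤ vol G Set.univ / 2 ∧ x = cond G S} = ∅ := by
    ext x
    simp only [Set.mem_setOf_eq, Set.mem_empty_iff_false, iff_false]
    rintro ⟨S, ⟨v, _⟩, -, -⟩
    exact h.elim v
  rw [conductance, this, Real.sInf_empty] at hφ
  exact lt_irrefl _ hφ

lemma deg_le_card_sub_one (hdeg : ∀ v, 1 ≤ deg G v) (v : V) :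
    deg G v ≤ (Fintype.card V : ℝ) - 1 := by
  classical
  have h1 : (Finset.univ.filter fun u => G.Adj v u) ⊆ Finset.univ.erase v := by
    intro u hu
    simp only [Finset.mem_filter] at hu
    exact Finset.mem_erase.2 ⟨hu.2.ne', Finset.mem_univ u⟩
  have h2 := Finset.card_le_card h1
  rw [Finset.card_erase_of_mem (Finset.mem_univ v), Finset.card_univ] at h2
  have h3 : 1 ≤ Fintype.card V := Fintype.card_pos_iff.2 ⟨v⟩
  rw [deg]
  have := Nat.cast_le (α := ℝ) |>.2 h2
  rw [Nat.cast_sub h3] at this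
  simpa using this

lemma conductance_le_one (hdeg : ∀ v, 1 ≤ deg G v) (hne : Nonempty V) :
    conductance G ≤ 1 := by
  classical
  obtain ⟨v⟩ := hne
  have hvol : vol G {v} = deg G v := by
    rw [vol, Finset.sum_congr (s₂ := {v}) (by ext u; simp) (fun _ _ => rfl)]
    exact Finset.sum_singleton _ _
  have hvc : vol G ({v}ᶜ : Set V) = ∑ u ∈ Finset.univ.erase v, deg G u := by
    rw [vol]
    refine Finset.sum_congr ?_ fun _ _ => rfl
    ext u; simp [eq_comm]
  have h3 : 1 ≤ Fintype.card V := Fintype.card_pos_iff.2 ⟨v⟩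
  have hcard : ((Finset.univ.erase v).card : ℝ) = (Fintype.card V : ℝ) - 1 := by
    rw [Finset.card_erase_of_mem (Finset.mem_univ v), Finset.card_univ, Nat.cast_sub h3,
      Nat.cast_one]
  have hcompl : ((Fintype.card V : ℝ) - 1) ≤ vol G ({v}ᶜ) := by
    rw [hvc]
    calc ((Fintype.card V : ℝ) - 1) = ∑ _u ∈ Finset.univ.erase v, (1:ℝ) := by
          rw [Finset.sum_const, nsmul_eq_mul, mul_one, hcard]
      _ ≤ ∑ u ∈ Finset.univ.erase v, deg G u := Finset.sum_le_sum fun u _ => hdeg u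
  have hvolhalf : vol G {v} ≤ vol G Set.univ / 2 := by
    have hsum := vol_add_compl G {v}
    have hd := deg_le_card_sub_one G hdeg v
    rw [hvol]; linarith
  have hcond : cond G {v} ≤ 1 := by
    rw [cond, hvol, div_le_one (by linarith [hdeg v]), eB_eq_sum]
    refine le_trans (Finset.sum_le_sum (g := fun p => if p.1 = v then (1:ℝ) else 0)
      fun p _ => ?_) ?_
    · by_cases h1 : p.1 = v <;> by_cases h2 : p.2 = v <;>
        simp [h1, h2, Set.mem_singleton_iff]
    · rw [sum_pairs_fst G (fun u => if u = v then (1:ℝ) else 0)]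
      rw [Finset.sum_eq_single v] <;> simp +contextual
  calc conductance G ≤ cond G {v} := conductance_le_cond G ⟨v, rfl⟩ hvolhalf
    _ ≤ 1 := hcond

end InfFacts

section Coarea

variable [Fintype V]

/-- The finite set of thresholds: the base value `b` together with all values of `g`. -/
def thrT (g : V → ℝ) (b : ℝ) : Finset ℝ := insert b (Finset.image g Finset.univ)

/-- The predecessor of `t` among the thresholds. -/
def prevT (g : V → ℝ) (b t : ℝ) : ℝ :=
  if h : ((thrT g b).filter (fun s => s < t)).Nonempty
  then ((thrT g b).filter (fun s => s < t)).max' h else b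

/-- The gap between `t` and its predecessor threshold. -/
def gapT (g : V → ℝ) (b t : ℝ) : ℝ := t - prevT g b t

/-- The positive thresholds. -/
def Tp (g : V → ℝ) (b : ℝ) : Finset ℝ := (thrT g b).filter (fun t => b < t)

variable {g : V → ℝ} {b : ℝ}

lemma b_mem_thrT : b ∈ thrT g b := Finset.mem_insert_self _ _

lemma g_mem_thrT (v : V) : g v ∈ thrT g b :=
  Finset.mem_insert_of_mem (Finset.mem_image_of_mem g (Finset.mem_univ v))

lemma le_of_mem_thrT (hb : ∀ v, b ≤ g v) {a : ℝ} (ha : a ∈ thrT g b) : b ≤ a := by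
  rcases Finset.mem_insert.1 ha with h | h
  · exact h.ge
  · obtain ⟨v, _, rfl⟩ := Finset.mem_image.1 h
    exact hb v

lemma prevT_spec {t : ℝ} (ht : b < t) :
    prevT g b t < t ∧ prevT g b t ∈ thrT g b ∧ b ≤ prevT g b t := by
  have hne : ((thrT g b).filter (fun s => s < t)).Nonempty :=
    ⟨b, by rw [Finset.mem_filter]; exact ⟨b_mem_thrT, ht⟩⟩
  rw [prevT, dif_pos hne]
  have hmem := Finset.max'_mem _ hne
  rw [Finset.mem_filter] at hmem
  exact ⟨hmem.2, hmem.1,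
    Finset.le_max' _ b (by rw [Finset.mem_filter]; exact ⟨b_mem_thrT, ht⟩)⟩

lemma gapT_pos {t : ℝ} (ht : b < t) : 0 < gapT g b t := by
  have := (prevT_spec (g := g) ht).1
  rw [gapT]; linarith

lemma gapT_nonneg {t : ℝ} (ht : b < t) : 0 ≤ gapT g b t := (gapT_pos ht).le

lemma I1_aux (hb : ∀ v, b ≤ g v) :
    ∀ (n : ℕ) (a : ℝ), a ∈ thrT g b →
      ((thrT g b).filter (fun t => b < t ∧ t ≤ a)).card ≤ n →
      ∑ t ∈ (thrT g b).filter (fun t => b < t ∧ t ≤ a), gapT g b t = a - b := by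
  intro n
  induction n with
  | zero =>
    intro a ha hcard
    have hfe : (thrT g b).filter (fun t => b < t ∧ t ≤ a) = ∅ :=
      Finset.card_eq_zero.1 (Nat.le_zero.1 hcard)
    have hba : b ≤ a := le_of_mem_thrT hb ha
    have : ¬ b < a := by
      intro h
      have : a ∈ (thrT g b).filter (fun t => b < t ∧ t ≤ a) :=
        Finset.mem_filter.2 ⟨ha, h, le_rfl⟩
      rw [hfe] at this
      exact absurd this (Finset.notMem_empty a)
    have hab : a = b := le_antisymm (not_lt.1 this) hba
    rw [hfe, Finset.sum_empty, hab, sub_self]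
  | succ n ih =>
    intro a ha hcard
    by_cases hempty : (thrT g b).filter (fun t => b < t ∧ t ≤ a) = ∅
    · have hba : b ≤ a := le_of_mem_thrT hb ha
      have : ¬ b < a := by
        intro h
        have : a ∈ (thrT g b).filter (fun t => b < t ∧ t ≤ a) :=
          Finset.mem_filter.2 ⟨ha, h, le_rfl⟩
        rw [hempty] at this
        exact absurd this (Finset.notMem_empty a)
      rw [hempty, Finset.sum_empty, le_antisymm (not_lt.1 this) hba, sub_self]
    · obtain ⟨t0, ht0⟩ := Finset.nonempty_iff_ne_empty.2 hempty
      rw [Finset.mem_filter] at ht0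
      have hba : b < a := lt_of_lt_of_le ht0.2.1 ht0.2.2
      obtain ⟨hplt, hpmem, hbp⟩ := prevT_spec (g := g) hba
      set p := prevT g b a with hp
      have hamem : a ∈ (thrT g b).filter (fun t => b < t ∧ t ≤ a) :=
        Finset.mem_filter.2 ⟨ha, hba, le_rfl⟩
      have herase : ((thrT g b).filter (fun t => b < t ∧ t ≤ a)).erase a
          = (thrT g b).filter (fun t => b < t ∧ t ≤ p) := by
        ext t
        simp only [Finset.mem_erase, Finset.mem_filter]
        constructor
        · rintro ⟨hta, htT, hbt, htla⟩
          refine ⟨htT, hbt, ?_⟩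
          have htlta : t < a := lt_of_le_of_ne htla hta
          have hne : ((thrT g b).filter (fun s => s < a)).Nonempty :=
            ⟨b, by rw [Finset.mem_filter]; exact ⟨b_mem_thrT, hba⟩⟩
          have : t ≤ ((thrT g b).filter (fun s => s < a)).max' hne :=
            Finset.le_max' _ t (by rw [Finset.mem_filter]; exact ⟨htT, htlta⟩)
          rwa [hp, prevT, dif_pos hne]
        · rintro ⟨htT, hbt, htlp⟩
          exact ⟨(lt_of_le_of_lt htlp hplt).ne, htT, hbt, le_trans htlp hplt.le⟩
      have hcard' : ((thrT g b).filter (fun t => b < t ∧ t ≤ p)).card ≤ n := by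
        rw [← herase]
        have := Finset.card_erase_of_mem hamem
        omega
      have hsum := ih p hpmem hcard'
      calc ∑ t ∈ (thrT g b).filter (fun t => b < t ∧ t ≤ a), gapT g b t
          = gapT g b a + ∑ t ∈ ((thrT g b).filter (fun t => b < t ∧ t ≤ a)).erase a,
              gapT g b t := (Finset.add_sum_erase _ _ hamem).symm
        _ = (a - p) + (p - b) := by rw [herase, hsum, gapT]
        _ = a - b := by ring

lemma sum_gap_ind (hb : ∀ v, b ≤ g v) {a : ℝ} (ha : a ∈ thrT g b) :
    ∑ t ∈ Tp g b, gapT g b t * (if t ≤ a then (1:ℝ) else 0) = a - b := by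
  rw [← I1_aux hb ((thrT g b).filter (fun t => b < t ∧ t ≤ a)).card a ha le_rfl]
  rw [Tp, Finset.sum_filter, Finset.sum_filter]
  refine Finset.sum_congr rfl fun t _ => ?_
  by_cases h1 : b < t <;> by_cases h2 : t ≤ a <;> simp [h1, h2]

lemma sum_gap_ind_two (hb : ∀ v, b ≤ g v) {a1 a2 : ℝ}
    (ha1 : a1 ∈ thrT g b) (ha2 : a2 ∈ thrT g b) :
    ∑ t ∈ Tp g b, gapT g b t * ((if t ≤ a1 then (1:ℝ) else 0) * (if t ≤ a2 then (1:ℝ) else 0))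
      = min a1 a2 - b := by
  have hmin : min a1 a2 ∈ thrT g b := by
    rcases min_cases a1 a2 with ⟨h, _⟩ | ⟨h, _⟩ <;> rw [h] <;> assumption
  rw [← sum_gap_ind hb hmin]
  refine Finset.sum_congr rfl fun t _ => ?_
  by_cases h1 : t ≤ a1 <;> by_cases h2 : t ≤ a2 <;>
    simp [h1, h2, le_min_iff]

end Coarea

section Sweep

variable [Fintype V] (G : SimpleGraph V) {g : V → ℝ} {b : ℝ}

lemma sweep_cross (hb : ∀ v, b ≤ g v) :
    ∑ t ∈ Tp g b, gapT g b t * eB G {v | t ≤ g v} {v | t ≤ g v}ᶜ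
      = ∑ p ∈ pairs G, (g p.1 - min (g p.1) (g p.2)) := by
  calc ∑ t ∈ Tp g b, gapT g b t * eB G {v | t ≤ g v} {v | t ≤ g v}ᶜ
      = ∑ t ∈ Tp g b, ∑ p ∈ pairs G,
          (gapT g b t * (if t ≤ g p.1 then (1:ℝ) else 0)
           - gapT g b t * ((if t ≤ g p.1 then (1:ℝ) else 0) * (if t ≤ g p.2 then (1:ℝ) else 0))) := by
        refine Finset.sum_congr rfl fun t _ => ?_
        rw [eB_eq_sum, Finset.mul_sum]
        refine Finset.sum_congr rfl fun p _ => ?_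
        by_cases h1 : t ≤ g p.1 <;> by_cases h2 : t ≤ g p.2 <;>
          simp [h1, h2, Set.mem_setOf_eq, Set.mem_compl_iff] <;> ring
    _ = ∑ p ∈ pairs G, (g p.1 - min (g p.1) (g p.2)) := by
        rw [Finset.sum_comm]
        refine Finset.sum_congr rfl fun p _ => ?_
        rw [Finset.sum_sub_distrib, sum_gap_ind hb (g_mem_thrT p.1),
          sum_gap_ind_two hb (g_mem_thrT p.1) (g_mem_thrT p.2)]
        ring

lemma sweep_side (hb : ∀ v, b ≤ g v) (c : V → Prop) :
    ∑ t ∈ Tp g b, gapT g b t * eB G {v | c v ∧ t ≤ g v} {v | c v ∧ t ≤ g v}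
      = ∑ p ∈ pairs G, (if c p.1 ∧ c p.2 then (1:ℝ) else 0) * (min (g p.1) (g p.2) - b) := by
  calc ∑ t ∈ Tp g b, gapT g b t * eB G {v | c v ∧ t ≤ g v} {v | c v ∧ t ≤ g v}
      = ∑ t ∈ Tp g b, ∑ p ∈ pairs G,
          (if c p.1 ∧ c p.2 then (1:ℝ) else 0) *
            (gapT g b t * ((if t ≤ g p.1 then (1:ℝ) else 0) * (if t ≤ g p.2 then (1:ℝ) else 0))) := by
        refine Finset.sum_congr rfl fun t _ => ?_
        rw [eB_eq_sum, Finset.mul_sum]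
        refine Finset.sum_congr rfl fun p _ => ?_
        by_cases hc1 : c p.1 <;> by_cases hc2 : c p.2 <;>
          by_cases h1 : t ≤ g p.1 <;> by_cases h2 : t ≤ g p.2 <;>
          simp [h1, h2, hc1, hc2, Set.mem_setOf_eq] <;> ring
    _ = _ := by
        rw [Finset.sum_comm]
        refine Finset.sum_congr rfl fun p _ => ?_
        rw [← Finset.mul_sum, sum_gap_ind_two hb (g_mem_thrT p.1) (g_mem_thrT p.2)]

lemma sweep_vol (hb : ∀ v, b ≤ g v) :
    ∑ t ∈ Tp g b, gapT g b t * vol G {v | t ≤ g v} = ∑ v, deg G v * (g v - b) := by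
  calc ∑ t ∈ Tp g b, gapT g b t * vol G {v | t ≤ g v}
      = ∑ t ∈ Tp g b, ∑ v, deg G v * (gapT g b t * (if t ≤ g v then (1:ℝ) else 0)) := by
        refine Finset.sum_congr rfl fun t _ => ?_
        rw [vol_eq_sum, Finset.mul_sum]
        refine Finset.sum_congr rfl fun v _ => ?_
        by_cases h : t ≤ g v <;> simp [h, Set.mem_setOf_eq] <;> ring
    _ = ∑ v, deg G v * (g v - b) := by
        rw [Finset.sum_comm]
        refine Finset.sum_congr rfl fun v _ => ?_
        rw [← Finset.mul_sum, sum_gap_ind hb (g_mem_thrT v)]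

lemma sum_sub_min_eq_half_abs (F : V → ℝ) :
    ∑ p ∈ pairs G, (F p.1 - min (F p.1) (F p.2))
      = (1/2) * ∑ p ∈ pairs G, |F p.1 - F p.2| := by
  have hswap : ∑ p ∈ pairs G, (F p.1 - min (F p.1) (F p.2))
      = ∑ p ∈ pairs G, (F p.2 - min (F p.2) (F p.1)) :=
    sum_pairs_swap G (fun a b2 => F a - min (F a) (F b2))
  have hdouble : ∑ p ∈ pairs G, (F p.1 - min (F p.1) (F p.2))
      + ∑ p ∈ pairs G, (F p.2 - min (F p.2) (F p.1))
      = ∑ p ∈ pairs G, |F p.1 - F p.2| := by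
    rw [← Finset.sum_add_distrib]
    refine Finset.sum_congr rfl fun p _ => ?_
    rcases le_total (F p.1) (F p.2) with h | h
    · rw [min_eq_left h, min_eq_right h, abs_of_nonpos (by linarith)]; ring
    · rw [min_eq_right h, min_eq_left h, abs_of_nonneg (by linarith)]; ring
  linarith

end Sweep

section Poincare

variable [Fintype V] (G : SimpleGraph V)

lemma level_cut_lower (hdeg : ∀ v, 1 ≤ deg G v) (f : V → ℝ) (hf : ∀ v, 0 ≤ f v)
    (hsupp : vol G {v | 0 < f v} ≤ vol G Set.univ / 2) :
    conductance G * ∑ v, deg G v * (f v)^2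
      ≤ ∑ p ∈ pairs G, ((f p.1)^2 - min ((f p.1)^2) ((f p.2)^2)) := by
  classical
  set g : V → ℝ := fun v => (f v)^2 with hg
  have hb : ∀ v, (0:ℝ) ≤ g v := fun v => sq_nonneg _
  have h1 : ∑ t ∈ Tp g 0, gapT g 0 t * vol G {v | t ≤ g v} = ∑ v, deg G v * (f v)^2 := by
    rw [sweep_vol G hb]; simp [hg]
  have h2 := sweep_cross G (g := g) (b := 0) hb
  have key : ∀ t ∈ Tp g 0, conductance G * (gapT g 0 t * vol G {v | t ≤ g v})
      ≤ gapT g 0 t * eB G {v | t ≤ g v} {v | t ≤ g v}ᶜ := by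
    intro t ht
    rw [Tp, Finset.mem_filter] at ht
    have htpos : (0:ℝ) < t := ht.2
    have htmem : t ∈ Finset.image g Finset.univ := by
      rcases Finset.mem_insert.1 ht.1 with h | h
      · exact absurd h htpos.ne'
      · exact h
    obtain ⟨v, _, hv⟩ := Finset.mem_image.1 htmem
    have hSne : ({v | t ≤ g v} : Set V).Nonempty := ⟨v, hv.ge⟩
    have hSsub : ({v | t ≤ g v} : Set V) ⊆ {v | 0 < f v} := by
      intro u hu
      simp only [Set.mem_setOf_eq] at hu ⊢
      have : 0 < g u := lt_of_lt_of_le htpos hu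
      rcases (hf u).lt_or_eq with h | h
      · exact h
      · exfalso; rw [hg] at this; simp only [← h] at this; simp at this
    have hvolle : vol G {v | t ≤ g v} ≤ vol G Set.univ / 2 :=
      le_trans (vol_mono G hSsub) hsupp
    have hvolpos := vol_pos G hdeg hSne
    have hcond := conductance_le_cond G hSne hvolle
    rw [cond] at hcond
    have hmain : conductance G * vol G {v | t ≤ g v}
        ≤ eB G {v | t ≤ g v} {v | t ≤ g v}ᶜ := by
      rw [← le_div_iff₀ hvolpos] at *
      exact hcond
    have hgap := gapT_nonneg (g := g) (b := 0) htpos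
    calc conductance G * (gapT g 0 t * vol G {v | t ≤ g v})
        = gapT g 0 t * (conductance G * vol G {v | t ≤ g v}) := by ring
      _ ≤ gapT g 0 t * eB G {v | t ≤ g v} {v | t ≤ g v}ᶜ :=
          mul_le_mul_of_nonneg_left hmain hgap
  calc conductance G * ∑ v, deg G v * (f v)^2
      = ∑ t ∈ Tp g 0, conductance G * (gapT g 0 t * vol G {v | t ≤ g v}) := by
        rw [← Finset.mul_sum, h1]
    _ ≤ ∑ t ∈ Tp g 0, gapT g 0 t * eB G {v | t ≤ g v} {v | t ≤ g v}ᶜ :=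
        Finset.sum_le_sum key
    _ = _ := h2

lemma poincare_part (hdeg : ∀ v, 1 ≤ deg G v) (f : V → ℝ) (hf : ∀ v, 0 ≤ f v)
    (hsupp : vol G {v | 0 < f v} ≤ vol G Set.univ / 2) :
    conductance G ^2 * ∑ v, deg G v * (f v)^2 ≤ ∑ p ∈ pairs G, (f p.1 - f p.2)^2 := by
  classical
  set Sf := ∑ v, deg G v * (f v)^2 with hSf
  set A := ∑ p ∈ pairs G, (f p.1 - f p.2)^2 with hA
  set X := ∑ p ∈ pairs G, |(f p.1)^2 - (f p.2)^2| with hX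
  have hSf0 : 0 ≤ Sf := Finset.sum_nonneg fun v _ => mul_nonneg (deg_nonneg G v) (sq_nonneg _)
  have hA0 : 0 ≤ A := Finset.sum_nonneg fun p _ => sq_nonneg _
  have hX0 : 0 ≤ X := Finset.sum_nonneg fun p _ => abs_nonneg _
  have hphi0 : 0 ≤ conductance G := conductance_nonneg G
  have h1 : conductance G * Sf ≤ (1/2) * X := by
    have := level_cut_lower G hdeg f hf hsupp
    rwa [sum_sub_min_eq_half_abs G (fun v => (f v)^2)] at this
  have h3 : ∑ p ∈ pairs G, (f p.1 + f p.2)^2 ≤ 4 * Sf := by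
    have e1 : ∑ p ∈ pairs G, (f p.1)^2 = Sf := sum_pairs_fst G (fun v => (f v)^2)
    have e2 : ∑ p ∈ pairs G, (f p.2)^2 = Sf := sum_pairs_snd G (fun v => (f v)^2)
    have : ∑ p ∈ pairs G, (f p.1 + f p.2)^2
        ≤ ∑ p ∈ pairs G, (2*(f p.1)^2 + 2*(f p.2)^2) :=
      Finset.sum_le_sum fun p _ => by nlinarith [sq_nonneg (f p.1 - f p.2)]
    rw [Finset.sum_add_distrib, ← Finset.mul_sum, ← Finset.mul_sum, e1, e2] at this
    linarith
  have hCS : X^2 ≤ A * (4 * Sf) := by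
    have hcs := Finset.sum_mul_sq_le_sq_mul_sq (pairs G)
      (fun p => |f p.1 - f p.2|) (fun p => f p.1 + f p.2)
    have heq : ∑ p ∈ pairs G, |f p.1 - f p.2| * (f p.1 + f p.2) = X := by
      refine Finset.sum_congr rfl fun p _ => ?_
      rw [show (f p.1)^2 - (f p.2)^2 = (f p.1 - f p.2) * (f p.1 + f p.2) from by ring,
        abs_mul, abs_of_nonneg (show (0:ℝ) ≤ f p.1 + f p.2 from add_nonneg (hf _) (hf _))]
    have heq2 : ∑ p ∈ pairs G, |f p.1 - f p.2|^2 = A := by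
      refine Finset.sum_congr rfl fun p _ => ?_
      rw [sq_abs]
    rw [heq, heq2] at hcs
    calc X^2 ≤ A * ∑ p ∈ pairs G, (f p.1 + f p.2)^2 := hcs
      _ ≤ A * (4 * Sf) := mul_le_mul_of_nonneg_left h3 hA0
  by_cases hS : Sf = 0
  · rw [hS, mul_zero]; exact hA0
  · have hSpos : 0 < Sf := lt_of_le_of_ne hSf0 (Ne.symm hS)
    have e := pow_le_pow_left₀ (mul_nonneg hphi0 hSf0) h1 2
    have step : (conductance G * Sf)^2 ≤ A * Sf := by nlinarith [hCS, e]
    have : conductance G ^2 * Sf * Sf ≤ A * Sf := by nlinarith [step]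
    exact le_of_mul_le_mul_right this hSpos

lemma abs_part_ineq (a b c : ℝ) :
    (max (a - c) 0 - max (b - c) 0)^2 + (max (c - a) 0 - max (c - b) 0)^2 ≤ (a - b)^2 := by
  rcases le_total a c with h1 | h1 <;> rcases le_total b c with h2 | h2
  · rw [max_eq_right (by linarith), max_eq_right (by linarith),
      max_eq_left (by linarith), max_eq_left (by linarith)]
    nlinarith
  · rw [max_eq_right (by linarith), max_eq_left (by linarith),
      max_eq_left (by linarith), max_eq_right (by linarith)]
    nlinarith [mul_nonneg (sub_nonneg.2 h1) (sub_nonneg.2 h2)]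
  · rw [max_eq_left (by linarith), max_eq_right (by linarith),
      max_eq_right (by linarith), max_eq_left (by linarith)]
    nlinarith [mul_nonneg (sub_nonneg.2 h1) (sub_nonneg.2 h2)]
  · rw [max_eq_left (by linarith), max_eq_left (by linarith),
      max_eq_right (by linarith), max_eq_right (by linarith)]
    nlinarith

lemma poincare (hdeg : ∀ v, 1 ≤ deg G v) (z : V → ℝ) (c : ℝ)
    (hmed1 : vol G {v | c < z v} ≤ vol G Set.univ / 2)
    (hmed2 : vol G {v | z v < c} ≤ vol G Set.univ / 2) :
    conductance G ^2 * ∑ v, deg G v * (z v - c)^2 ≤ ∑ p ∈ pairs G, (z p.1 - z p.2)^2 := by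
  classical
  set f : V → ℝ := fun v => max (z v - c) 0 with hfdef
  set g2 : V → ℝ := fun v => max (c - z v) 0 with hg2def
  have hsupp1 : ({v | 0 < f v} : Set V) = {v | c < z v} := by
    ext v; simp [hfdef, lt_max_iff, sub_pos]
  have hsupp2 : ({v | 0 < g2 v} : Set V) = {v | z v < c} := by
    ext v; simp [hg2def, lt_max_iff, sub_pos]
  have hp1 := poincare_part G hdeg f (fun v => le_max_right _ _)
    (by rw [hsupp1]; exact hmed1)
  have hp2 := poincare_part G hdeg g2 (fun v => le_max_right _ _)
    (by rw [hsupp2]; exact hmed2)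
  have hpt1 : ∑ v, deg G v * (z v - c)^2
      = ∑ v, deg G v * (f v)^2 + ∑ v, deg G v * (g2 v)^2 := by
    rw [← Finset.sum_add_distrib]
    refine Finset.sum_congr rfl fun v _ => ?_
    have : (z v - c)^2 = (f v)^2 + (g2 v)^2 := by
      rcases le_total (z v) c with h | h
      · rw [hfdef, hg2def]; simp only
        rw [max_eq_right (by linarith), max_eq_left (by linarith)]; ring
      · rw [hfdef, hg2def]; simp only
        rw [max_eq_left (by linarith), max_eq_right (by linarith)]; ring
    rw [this]; ring
  have hpt2 : ∑ p ∈ pairs G, (f p.1 - f p.2)^2 + ∑ p ∈ pairs G, (g2 p.1 - g2 p.2)^2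
      ≤ ∑ p ∈ pairs G, (z p.1 - z p.2)^2 := by
    rw [← Finset.sum_add_distrib]
    exact Finset.sum_le_sum fun p _ => abs_part_ineq (z p.1) (z p.2) c
  rw [hpt1, mul_add]
  linarith

end Poincare

section Selection

variable [Fintype V] (G : SimpleGraph V) {g : V → ℝ} {b : ℝ}

lemma mem_Tp_iff {t : ℝ} : t ∈ Tp g b ↔ (b < t ∧ ∃ v, g v = t) := by
  rw [Tp, Finset.mem_filter]
  constructor
  · rintro ⟨hT, hbt⟩
    refine ⟨hbt, ?_⟩
    rcases Finset.mem_insert.1 hT with h | h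
    · exact absurd h hbt.ne'
    · obtain ⟨v, _, hv⟩ := Finset.mem_image.1 h
      exact ⟨v, hv⟩
  · rintro ⟨hbt, v, hv⟩
    exact ⟨Finset.mem_insert_of_mem (Finset.mem_image.2 ⟨v, Finset.mem_univ v, hv⟩), hbt⟩

lemma exists_good_threshold (N : ℝ → ℝ) (Num Den : ℝ) (hDen : 0 < Den) (hNum : 0 ≤ Num)
    (hN : ∑ t ∈ Tp g b, gapT g b t * N t ≤ Num)
    (hvol : Den ≤ ∑ t ∈ Tp g b, gapT g b t * vol G {v | t ≤ g v}) :
    ∃ t ∈ Tp g b, N t * Den ≤ vol G {v | t ≤ g v} * Num := by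
  have hTp : (Tp g b).Nonempty := by
    by_contra h
    rw [Finset.not_nonempty_iff_eq_empty] at h
    rw [h, Finset.sum_empty] at hvol; linarith
  have hsum : ∑ t ∈ Tp g b, (gapT g b t * N t) * Den
      ≤ ∑ t ∈ Tp g b, (gapT g b t * vol G {v | t ≤ g v}) * Num := by
    rw [← Finset.sum_mul, ← Finset.sum_mul]
    calc (∑ t ∈ Tp g b, gapT g b t * N t) * Den ≤ Num * Den :=
          mul_le_mul_of_nonneg_right hN hDen.le
      _ = Den * Num := by ring
      _ ≤ (∑ t ∈ Tp g b, gapT g b t * vol G {v | t ≤ g v}) * Num :=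
          mul_le_mul_of_nonneg_right hvol hNum
  obtain ⟨t, ht, hle⟩ := Finset.exists_le_of_sum_le hTp hsum
  have hbt : b < t := (mem_Tp_iff.1 ht).1
  have hgap : 0 < gapT g b t := gapT_pos hbt
  refine ⟨t, ht, ?_⟩
  have h1 : gapT g b t * (N t * Den) ≤ gapT g b t * (vol G {v | t ≤ g v} * Num) := by
    calc gapT g b t * (N t * Den) = (gapT g b t * N t) * Den := by ring
      _ ≤ (gapT g b t * vol G {v | t ≤ g v}) * Num := hle
      _ = gapT g b t * (vol G {v | t ≤ g v} * Num) := by ring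
  exact le_of_mul_le_mul_left h1 hgap

end Selection

section Trevisan

variable [Fintype V] (G : SimpleGraph V)

lemma same_sign_abs_add {a b2 : ℝ} (h : (a < 0 ∧ b2 < 0) ∨ (0 < a ∧ 0 < b2)) :
    |a + b2| = |a| + |b2| := by
  rcases h with ⟨h1, h2⟩ | ⟨h1, h2⟩
  · rw [abs_of_neg h1, abs_of_neg h2, abs_of_neg (by linarith)]; ring
  · rw [abs_of_pos h1, abs_of_pos h2, abs_of_pos (by linarith)]

lemma abs_sub_abs_le_abs_add (a b2 : ℝ) : |(|a| - |b2|)| ≤ |a + b2| := by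
  have := abs_abs_sub_abs_le_abs_sub a (-b2)
  simpa using this

lemma pair_bound_trevisan (a b2 : ℝ) :
    (if a < 0 ∧ b2 < 0 then (1:ℝ) else 0) * (min (a^2) (b2^2) - 0)
    + (if 0 < a ∧ 0 < b2 then (1:ℝ) else 0) * (min (a^2) (b2^2) - 0)
    + (a^2 - min (a^2) (b2^2)) ≤ |a + b2| * (|a| + |b2|) := by
  have key : |a| - |b2| ≤ |a + b2| := le_trans (le_abs_self _) (abs_sub_abs_le_abs_add a b2)
  by_cases c1 : a < 0 ∧ b2 < 0
  · rw [if_pos c1, if_neg (by rintro ⟨h3, _⟩; linarith [c1.1])]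
    rw [same_sign_abs_add (Or.inl c1)]
    nlinarith [abs_nonneg a, abs_nonneg b2, sq_abs a, min_le_left (a^2) (b2^2)]
  · rw [if_neg c1]
    by_cases c2 : 0 < a ∧ 0 < b2
    · rw [if_pos c2, same_sign_abs_add (Or.inr c2)]
      nlinarith [abs_nonneg a, abs_nonneg b2, sq_abs a, min_le_left (a^2) (b2^2)]
    · rw [if_neg c2]
      rcases le_total (a^2) (b2^2) with h | h
      · rw [min_eq_left h]
        have := mul_nonneg (abs_nonneg (a + b2)) (add_nonneg (abs_nonneg a) (abs_nonneg b2))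
        linarith
      · rw [min_eq_right h]
        have h2 : |b2| ≤ |a| := by
          rw [← Real.sqrt_sq_eq_abs, ← Real.sqrt_sq_eq_abs]
          exact Real.sqrt_le_sqrt h
        nlinarith [sq_abs a, sq_abs b2, abs_nonneg a, abs_nonneg b2, key]

lemma trevisan (hdeg : ∀ v, 1 ≤ deg G v) (y : V → ℝ) (hy : y ≠ 0) (ε : ℝ)
    (hQ : ∑ p ∈ pairs G, (y p.1 + y p.2)^2 ≤ 2 * ε * ∑ v, deg G v * (y v)^2) :
    bip G ≤ Real.sqrt (8 * ε) := by
  classical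
  set g : V → ℝ := fun v => (y v)^2 with hgdef
  set SDY := ∑ v, deg G v * (y v)^2 with hSDYdef
  have hb : ∀ v, (0:ℝ) ≤ g v := fun v => sq_nonneg _
  have hSDY : 0 < SDY := by
    obtain ⟨v, hv⟩ : ∃ v, y v ≠ 0 := Function.ne_iff.1 hy
    refine Finset.sum_pos' (fun u _ => mul_nonneg (deg_nonneg G u) (sq_nonneg _))
      ⟨v, Finset.mem_univ v, ?_⟩
    have : 0 < (y v)^2 := by positivity
    exact mul_pos (lt_of_lt_of_le one_pos (hdeg v)) this
  have hQ0 : (0:ℝ) ≤ ∑ p ∈ pairs G, (y p.1 + y p.2)^2 :=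
    Finset.sum_nonneg fun p _ => sq_nonneg _
  have hε : 0 ≤ ε := by nlinarith
  -- the numerator function
  set N : ℝ → ℝ := fun t =>
    eB G {v | y v < 0 ∧ t ≤ g v} {v | y v < 0 ∧ t ≤ g v}
    + eB G {v | 0 < y v ∧ t ≤ g v} {v | 0 < y v ∧ t ≤ g v}
    + eB G {v | t ≤ g v} {v | t ≤ g v}ᶜ with hNdef
  have hNsum : ∑ t ∈ Tp g 0, gapT g 0 t * N t
      = ∑ p ∈ pairs G,
          ((if y p.1 < 0 ∧ y p.2 < 0 then (1:ℝ) else 0) * (min (g p.1) (g p.2) - 0)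
          + (if 0 < y p.1 ∧ 0 < y p.2 then (1:ℝ) else 0) * (min (g p.1) (g p.2) - 0)
          + (g p.1 - min (g p.1) (g p.2))) := by
    rw [Finset.sum_add_distrib, Finset.sum_add_distrib]
    rw [← sweep_side G hb (fun v => y v < 0), ← sweep_side G hb (fun v => 0 < y v),
      ← sweep_cross G hb, ← Finset.sum_add_distrib, ← Finset.sum_add_distrib]
    refine Finset.sum_congr rfl fun t _ => ?_
    rw [hNdef]; ring
  have hW : ∑ t ∈ Tp g 0, gapT g 0 t * N t
      ≤ ∑ p ∈ pairs G, |y p.1 + y p.2| * (|y p.1| + |y p.2|) := by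
    rw [hNsum]
    exact Finset.sum_le_sum fun p _ => pair_bound_trevisan (y p.1) (y p.2)
  -- Cauchy-Schwarz
  have habs2 : ∑ p ∈ pairs G, (|y p.1| + |y p.2|)^2 ≤ 4 * SDY := by
    have e1 : ∑ p ∈ pairs G, (y p.1)^2 = SDY := sum_pairs_fst G (fun v => (y v)^2)
    have e2 : ∑ p ∈ pairs G, (y p.2)^2 = SDY := sum_pairs_snd G (fun v => (y v)^2)
    have hle : ∑ p ∈ pairs G, (|y p.1| + |y p.2|)^2
        ≤ ∑ p ∈ pairs G, (2*(y p.1)^2 + 2*(y p.2)^2) :=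
      Finset.sum_le_sum fun p _ => by
        nlinarith [sq_abs (y p.1), sq_abs (y p.2), sq_nonneg (|y p.1| - |y p.2|)]
    rw [Finset.sum_add_distrib, ← Finset.mul_sum, ← Finset.mul_sum, e1, e2] at hle
    linarith
  have hCS : (∑ p ∈ pairs G, |y p.1 + y p.2| * (|y p.1| + |y p.2|))^2
      ≤ (2 * ε * SDY) * (4 * SDY) := by
    have hcs := Finset.sum_mul_sq_le_sq_mul_sq (pairs G)
      (fun p => |y p.1 + y p.2|) (fun p => |y p.1| + |y p.2|)
    have e1 : ∑ p ∈ pairs G, |y p.1 + y p.2|^2 = ∑ p ∈ pairs G, (y p.1 + y p.2)^2 :=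
      Finset.sum_congr rfl fun p _ => sq_abs _
    rw [e1] at hcs
    calc (∑ p ∈ pairs G, |y p.1 + y p.2| * (|y p.1| + |y p.2|))^2
        ≤ (∑ p ∈ pairs G, (y p.1 + y p.2)^2) * ∑ p ∈ pairs G, (|y p.1| + |y p.2|)^2 := hcs
      _ ≤ (2 * ε * SDY) * (4 * SDY) := by
          apply mul_le_mul hQ habs2 (Finset.sum_nonneg fun p _ => sq_nonneg _)
          positivity
  have hWle : ∑ p ∈ pairs G, |y p.1 + y p.2| * (|y p.1| + |y p.2|)
      ≤ Real.sqrt (8 * ε) * SDY := by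
    set W := ∑ p ∈ pairs G, |y p.1 + y p.2| * (|y p.1| + |y p.2|) with hWdef
    have hW0 : 0 ≤ W := Finset.sum_nonneg fun p _ =>
      mul_nonneg (abs_nonneg _) (add_nonneg (abs_nonneg _) (abs_nonneg _))
    have h8 : (2 * ε * SDY) * (4 * SDY) = (8 * ε) * SDY^2 := by ring
    calc W = Real.sqrt (W^2) := (Real.sqrt_sq hW0).symm
      _ ≤ Real.sqrt ((8 * ε) * SDY^2) := Real.sqrt_le_sqrt (by rw [← h8]; exact hCS)
      _ = Real.sqrt (8 * ε) * SDY := by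
          rw [Real.sqrt_mul (by positivity), Real.sqrt_sq hSDY.le]
  have hNtotal : ∑ t ∈ Tp g 0, gapT g 0 t * N t ≤ Real.sqrt (8 * ε) * SDY :=
    le_trans hW hWle
  have hvolsum : SDY ≤ ∑ t ∈ Tp g 0, gapT g 0 t * vol G {v | t ≤ g v} := by
    rw [sweep_vol G hb]
    rw [hSDYdef]
    apply le_of_eq
    refine Finset.sum_congr rfl fun v _ => ?_
    rw [hgdef]; ring
  obtain ⟨t, ht, hgood⟩ := exists_good_threshold G N (Real.sqrt (8 * ε) * SDY) SDY
    hSDY (by positivity) hNtotal hvolsum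
  obtain ⟨hbt, v0, hv0⟩ := mem_Tp_iff.1 ht
  have hSne : ({v | t ≤ g v} : Set V).Nonempty := ⟨v0, hv0.ge⟩
  have hvolpos := vol_pos G hdeg hSne
  set L : Set V := {v | y v < 0 ∧ t ≤ g v} with hLdef
  set R : Set V := {v | 0 < y v ∧ t ≤ g v} with hRdef
  have hLR : L ∪ R = {v | t ≤ g v} := by
    ext v
    simp only [hLdef, hRdef, Set.mem_union, Set.mem_setOf_eq]
    constructor
    · rintro (⟨_, h⟩ | ⟨_, h⟩) <;> exact h
    · intro h
      have hyne : y v ≠ 0 := by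
        intro h0
        rw [hgdef] at h
        simp only [h0] at h
        norm_num at h
        linarith
      rcases hyne.lt_or_gt with h' | h'
      · exact Or.inl ⟨h', h⟩
      · exact Or.inr ⟨h', h⟩
  have hdisj : Disjoint L R := by
    rw [Set.disjoint_left]
    rintro v ⟨h1, _⟩ ⟨h2, _⟩
    linarith
  have hbipR : bipRatio G L R ≤ Real.sqrt (8 * ε) := by
    rw [bipRatio, eIn, eIn, hLR]
    have hnum : 2 * (eB G L L / 2) + 2 * (eB G R R / 2)
        + eB G {v | t ≤ g v} {v | t ≤ g v}ᶜ = N t := by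
      rw [hNdef]; ring
    rw [hnum, div_le_iff₀ hvolpos]
    calc N t = N t * SDY / SDY := by field_simp
      _ ≤ vol G {v | t ≤ g v} * (Real.sqrt (8 * ε) * SDY) / SDY :=
          (div_le_div_iff_of_pos_right hSDY).2 hgood
      _ = Real.sqrt (8 * ε) * vol G {v | t ≤ g v} := by field_simp
  have hbip := bip_le_bipRatio G hdisj (by rw [hLR]; exact hSne)
  linarith

end Trevisan

section MainCase

variable [Fintype V] (G : SimpleGraph V)

/-- The clamp of `|a|` to `[1/2, 3/4]`. -/
def clampF (a : ℝ) : ℝ := min (max |a| (1/2)) (3/4)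

lemma clampF_lb (a : ℝ) : (1/2 : ℝ) ≤ clampF a :=
  le_min (le_max_right _ _) (by norm_num)

lemma clampF_ub (a : ℝ) : clampF a ≤ (3/4 : ℝ) := min_le_right _ _

lemma clampF_lip (a b2 : ℝ) : (clampF a - clampF b2)^2 ≤ (|a| - |b2|)^2 := by
  have h1 : |clampF a - clampF b2| ≤ |(|a| - |b2|)| := by
    have hmin := abs_min_sub_min_le_max (max |a| (1/2)) (3/4) (max |b2| (1/2)) (3/4)
    have hmax := abs_max_sub_max_le_abs |a| |b2| (1/2)
    rw [clampF, clampF]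
    refine le_trans hmin ?_
    rw [sub_self, abs_zero, max_eq_left (abs_nonneg _)]
    exact hmax
  calc (clampF a - clampF b2)^2 = |clampF a - clampF b2|^2 := (sq_abs _).symm
    _ ≤ |(|a| - |b2|)|^2 := by
        apply pow_le_pow_left₀ (abs_nonneg _) h1
    _ = (|a| - |b2|)^2 := sq_abs _

lemma clampF_of_one_le {a : ℝ} (h : 1 ≤ |a|) : clampF a = 3/4 := by
  rw [clampF, min_eq_right]
  calc (3/4 : ℝ) ≤ 1 := by norm_num
    _ ≤ |a| := h
    _ ≤ max |a| (1/2) := le_max_left _ _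

lemma clampF_of_gt {a : ℝ} (h : (3/4:ℝ) < |a|) : clampF a = 3/4 := by
  rw [clampF, min_eq_right]
  calc (3/4 : ℝ) ≤ |a| := h.le
    _ ≤ max |a| (1/2) := le_max_left _ _

lemma half_lt_abs_of_clampF {a t : ℝ} (ht : 1/2 < t) (h : t ≤ clampF a) : 1/2 < |a| := by
  have h2 : 1/2 < max |a| (1/2) := lt_of_lt_of_le ht (le_trans h (min_le_left _ _))
  rcases max_cases |a| (1/2 : ℝ) with ⟨he, _⟩ | ⟨he, _⟩
  · rwa [he] at h2
  · rw [he] at h2; linarith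

lemma sq_abs_sub_le_sq_add (a b2 : ℝ) : (|a| - |b2|)^2 ≤ (a + b2)^2 := by
  have h := abs_sub_abs_le_abs_add a b2
  calc (|a| - |b2|)^2 = |(|a| - |b2|)|^2 := (sq_abs _).symm
    _ ≤ |a + b2|^2 := pow_le_pow_left₀ (abs_nonneg _) h 2
    _ = (a + b2)^2 := sq_abs _

lemma pair_bound_main (a b2 : ℝ) :
    (if a < 0 ∧ b2 < 0 then (1:ℝ) else 0) * (min (clampF a) (clampF b2) - 1/2)
    + (if 0 < a ∧ 0 < b2 then (1:ℝ) else 0) * (min (clampF a) (clampF b2) - 1/2)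
    ≤ (1/4) * (a + b2)^2 := by
  have hRHS : (0:ℝ) ≤ (1/4) * (a + b2)^2 := by positivity
  have hminlb : (1/2:ℝ) ≤ min (clampF a) (clampF b2) := le_min (clampF_lb a) (clampF_lb b2)
  have hminub : min (clampF a) (clampF b2) ≤ 3/4 := le_trans (min_le_left _ _) (clampF_ub a)
  have hsame : ∀ h : (a < 0 ∧ b2 < 0) ∨ (0 < a ∧ 0 < b2),
      min (clampF a) (clampF b2) - 1/2 ≤ (1/4) * (a + b2)^2 := by
    intro h
    rcases le_or_gt (min (clampF a) (clampF b2)) (1/2 : ℝ) with hm | hm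
    · linarith
    · have ha : 1/2 < |a| := half_lt_abs_of_clampF hm (min_le_left _ _)
      have hb : 1/2 < |b2| := half_lt_abs_of_clampF hm (min_le_right _ _)
      have habs := same_sign_abs_add h
      have h1 : 1 < |a + b2| := by rw [habs]; linarith
      have h2 : 1 < (a + b2)^2 := by
        calc (1:ℝ) = 1 * 1 := by norm_num
          _ < |a + b2| * |a + b2| := by
              apply mul_lt_mul' h1.le h1 (by norm_num) (by linarith)
          _ = (a + b2)^2 := by rw [← abs_mul, abs_mul_self]; ring
      linarith
  by_cases c1 : a < 0 ∧ b2 < 0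
  · rw [if_pos c1, if_neg (by rintro ⟨h3, _⟩; linarith [c1.1])]
    have := hsame (Or.inl c1)
    linarith
  · rw [if_neg c1]
    by_cases c2 : 0 < a ∧ 0 < b2
    · rw [if_pos c2]
      have := hsame (Or.inr c2)
      linarith
    · rw [if_neg c2]
      linarith

set_option maxHeartbeats 2000000 in
lemma maincase (hdeg : ∀ v, 1 ≤ deg G v) (hφ : 0 < conductance G)
    (hφ1 : conductance G ≤ 1) (hμ : 0 < vol G Set.univ)
    (y : V → ℝ) (ε : ℝ) (hε : 0 ≤ ε)
    (hQ : ∑ p ∈ pairs G, (y p.1 + y p.2)^2 ≤ 2 * ε * ∑ v, deg G v * (y v)^2)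
    (hmed1 : vol G Set.univ / 2 ≤ vol G {v | 1 ≤ |y v|})
    (hmed2 : vol G {v | 1 < |y v|} ≤ vol G Set.univ / 2)
    (hnorm : ∑ v, deg G v * (y v)^2 ≤ 4 * vol G Set.univ) :
    bip G ≤ 200 * ε / conductance G := by
  classical
  set φ := conductance G with hφdef
  set μ := vol G Set.univ with hμdef
  set SDY := ∑ v, deg G v * (y v)^2 with hSDYdef
  set z : V → ℝ := fun v => |y v| with hzdef
  set g : V → ℝ := fun v => clampF (y v) with hgdef
  have hb : ∀ v, (1/2 : ℝ) ≤ g v := fun v => clampF_lb (y v)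
  -- Q bound
  have hQ8 : ∑ p ∈ pairs G, (y p.1 + y p.2)^2 ≤ 8 * ε * μ := by
    calc ∑ p ∈ pairs G, (y p.1 + y p.2)^2 ≤ 2 * ε * SDY := hQ
      _ ≤ 2 * ε * (4 * μ) := by
          apply mul_le_mul_of_nonneg_left hnorm (by linarith)
      _ = 8 * ε * μ := by ring
  -- Poincare
  have hz1 : vol G {v | z v < 1} ≤ μ / 2 := by
    have hcompl : ({v | 1 ≤ z v} : Set V)ᶜ = {v | z v < 1} := by
      ext v; simp [not_le]
    have := vol_add_compl G {v | 1 ≤ z v}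
    rw [hcompl] at this
    have h1 : vol G Set.univ / 2 ≤ vol G {v | 1 ≤ z v} := hmed1
    linarith
  have hpoin : φ^2 * ∑ v, deg G v * (z v - 1)^2 ≤ 8 * ε * μ := by
    have h1 := poincare G hdeg z 1 hmed2 hz1
    have h2 : ∑ p ∈ pairs G, (z p.1 - z p.2)^2 ≤ ∑ p ∈ pairs G, (y p.1 + y p.2)^2 :=
      Finset.sum_le_sum fun p _ => sq_abs_sub_le_sq_add (y p.1) (y p.2)
    calc φ^2 * ∑ v, deg G v * (z v - 1)^2 ≤ ∑ p ∈ pairs G, (z p.1 - z p.2)^2 := h1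
      _ ≤ ∑ p ∈ pairs G, (y p.1 + y p.2)^2 := h2
      _ ≤ 8 * ε * μ := hQ8
  -- small vertices
  have hsmall : vol G {v | z v ≤ 3/4} ≤ 16 * ∑ v, deg G v * (z v - 1)^2 := by
    rw [vol_eq_sum, Finset.mul_sum]
    refine Finset.sum_le_sum fun v _ => ?_
    simp only [Set.mem_setOf_eq]
    by_cases h : z v ≤ 3/4
    · rw [if_pos h]
      have h2 : (1:ℝ)/16 ≤ (z v - 1)^2 := by nlinarith
      nlinarith [deg_nonneg G v, hdeg v]
    · rw [if_neg h]
      have := deg_nonneg G v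
      nlinarith [sq_nonneg (z v - 1)]
  have hz14 : ∑ v, deg G v * (z v - 1)^2 ≤ 8 * ε * μ / φ^2 := by
    rw [le_div_iff₀ (by positivity)]
    calc (∑ v, deg G v * (z v - 1)^2) * φ^2 = φ^2 * ∑ v, deg G v * (z v - 1)^2 := by ring
      _ ≤ 8 * ε * μ := hpoin
  -- numerator
  set N : ℝ → ℝ := fun t =>
    eB G {v | y v < 0 ∧ t ≤ g v} {v | y v < 0 ∧ t ≤ g v}
    + eB G {v | 0 < y v ∧ t ≤ g v} {v | 0 < y v ∧ t ≤ g v}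
    + eB G {v | t ≤ g v} {v | t ≤ g v}ᶜ with hNdef
  have hNsum : ∑ t ∈ Tp g (1/2), gapT g (1/2) t * N t
      = ∑ p ∈ pairs G,
          ((if y p.1 < 0 ∧ y p.2 < 0 then (1:ℝ) else 0) * (min (g p.1) (g p.2) - 1/2)
          + (if 0 < y p.1 ∧ 0 < y p.2 then (1:ℝ) else 0) * (min (g p.1) (g p.2) - 1/2)
          + (g p.1 - min (g p.1) (g p.2))) := by
    rw [Finset.sum_add_distrib, Finset.sum_add_distrib]
    rw [← sweep_side G hb (fun v => y v < 0), ← sweep_side G hb (fun v => 0 < y v),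
      ← sweep_cross G hb, ← Finset.sum_add_distrib, ← Finset.sum_add_distrib]
    refine Finset.sum_congr rfl fun t _ => ?_
    rw [hNdef]; ring
  -- side part bound
  have hside : ∑ p ∈ pairs G,
      ((if y p.1 < 0 ∧ y p.2 < 0 then (1:ℝ) else 0) * (min (g p.1) (g p.2) - 1/2)
      + (if 0 < y p.1 ∧ 0 < y p.2 then (1:ℝ) else 0) * (min (g p.1) (g p.2) - 1/2))
      ≤ (1/4) * ∑ p ∈ pairs G, (y p.1 + y p.2)^2 := by
    rw [Finset.mul_sum]
    exact Finset.sum_le_sum fun p _ => pair_bound_main (y p.1) (y p.2)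
  -- cross part
  set X := ∑ p ∈ pairs G, |g p.1 - g p.2| with hXdef
  have hX0 : 0 ≤ X := Finset.sum_nonneg fun p _ => abs_nonneg _
  have hA8 : ∑ p ∈ pairs G, (g p.1 - g p.2)^2 ≤ 8 * ε * μ := by
    calc ∑ p ∈ pairs G, (g p.1 - g p.2)^2 ≤ ∑ p ∈ pairs G, (y p.1 + y p.2)^2 := by
          refine Finset.sum_le_sum fun p _ => ?_
          exact le_trans (clampF_lip (y p.1) (y p.2)) (sq_abs_sub_le_sq_add (y p.1) (y p.2))
      _ ≤ 8 * ε * μ := hQ8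
  have hA0 : (0:ℝ) ≤ ∑ p ∈ pairs G, (g p.1 - g p.2)^2 :=
    Finset.sum_nonneg fun p _ => sq_nonneg _
  set B := ∑ p ∈ pairs G, (if g p.1 ≠ g p.2 then (1:ℝ) else 0) with hBdef
  have hB0 : (0:ℝ) ≤ B := Finset.sum_nonneg fun p _ => by positivity
  have hB256 : B ≤ 256 * ε * μ / φ^2 := by
    have step1 : B ≤ 2 * vol G {v | z v ≤ 3/4} := by
      have e1 : ∑ p ∈ pairs G, (if z p.1 ≤ 3/4 then (1:ℝ) else 0)
          = vol G {v | z v ≤ 3/4} := by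
        rw [sum_pairs_fst G (fun v => if z v ≤ 3/4 then (1:ℝ) else 0), vol_eq_sum]
        refine Finset.sum_congr rfl fun v _ => ?_
        simp only [Set.mem_setOf_eq]
      have e2 : ∑ p ∈ pairs G, (if z p.2 ≤ 3/4 then (1:ℝ) else 0)
          = vol G {v | z v ≤ 3/4} := by
        rw [sum_pairs_snd G (fun v => if z v ≤ 3/4 then (1:ℝ) else 0), vol_eq_sum]
        refine Finset.sum_congr rfl fun v _ => ?_
        simp only [Set.mem_setOf_eq]
      have hpt : ∀ p ∈ pairs G, (if g p.1 ≠ g p.2 then (1:ℝ) else 0)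
          ≤ (if z p.1 ≤ 3/4 then (1:ℝ) else 0) + (if z p.2 ≤ 3/4 then (1:ℝ) else 0) := by
        intro p _
        by_cases h1 : z p.1 ≤ 3/4
        · by_cases h2 : g p.1 ≠ g p.2 <;> by_cases h3 : z p.2 ≤ 3/4 <;>
            simp [h1, h2, h3] <;> norm_num
        · by_cases h3 : z p.2 ≤ 3/4
          · by_cases h2 : g p.1 ≠ g p.2 <;> simp [h1, h2, h3] <;> norm_num
          · have hg1 : g p.1 = 3/4 := clampF_of_gt (by rw [hzdef] at h1; simpa using not_le.1 h1)
            have hg2 : g p.2 = 3/4 := clampF_of_gt (by rw [hzdef] at h3; simpa using not_le.1 h3)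
            rw [if_neg (by rw [hg1, hg2]; simp), if_neg h1, if_neg h3]
            norm_num
      calc B ≤ ∑ p ∈ pairs G, ((if z p.1 ≤ 3/4 then (1:ℝ) else 0)
              + (if z p.2 ≤ 3/4 then (1:ℝ) else 0)) := Finset.sum_le_sum hpt
        _ = 2 * vol G {v | z v ≤ 3/4} := by
            rw [Finset.sum_add_distrib, e1, e2]; ring
    calc B ≤ 2 * vol G {v | z v ≤ 3/4} := step1
      _ ≤ 2 * (16 * ∑ v, deg G v * (z v - 1)^2) := by linarith [hsmall]
      _ ≤ 2 * (16 * (8 * ε * μ / φ^2)) := by linarith [hz14]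
      _ = 256 * ε * μ / φ^2 := by ring
  have hCS : X^2 ≤ (∑ p ∈ pairs G, (g p.1 - g p.2)^2) * B := by
    have hcs := Finset.sum_mul_sq_le_sq_mul_sq (pairs G)
      (fun p => |g p.1 - g p.2|) (fun p => if g p.1 ≠ g p.2 then (1:ℝ) else 0)
    have e1 : ∑ p ∈ pairs G, |g p.1 - g p.2| * (if g p.1 ≠ g p.2 then (1:ℝ) else 0) = X := by
      refine Finset.sum_congr rfl fun p _ => ?_
      by_cases h : g p.1 = g p.2
      · rw [if_neg (by simpa using h), mul_zero, h, sub_self, abs_zero]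
      · rw [if_pos h, mul_one]
    have e2 : ∑ p ∈ pairs G, |g p.1 - g p.2|^2 = ∑ p ∈ pairs G, (g p.1 - g p.2)^2 :=
      Finset.sum_congr rfl fun p _ => sq_abs _
    have e3 : ∑ p ∈ pairs G, (if g p.1 ≠ g p.2 then (1:ℝ) else 0)^2 = B := by
      refine Finset.sum_congr rfl fun p _ => ?_
      by_cases h : g p.1 ≠ g p.2 <;> simp [h]
    rw [e1, e2, e3] at hcs
    exact hcs
  have hX46 : X ≤ 46 * (ε * μ / φ) := by
    have ht : 0 ≤ ε * μ / φ := by positivity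
    have hXsq : X^2 ≤ 2048 * (ε * μ / φ)^2 := by
      have hAB : (∑ p ∈ pairs G, (g p.1 - g p.2)^2) * B
          ≤ (8 * ε * μ) * (256 * ε * μ / φ^2) :=
        mul_le_mul hA8 hB256 hB0 (by positivity)
      have heq : (8 * ε * μ) * (256 * ε * μ / φ^2) = 2048 * (ε * μ / φ)^2 := by
        field_simp
        ring
      linarith [hCS, hAB, heq ▸ hAB]
    calc X = Real.sqrt (X^2) := (Real.sqrt_sq hX0).symm
      _ ≤ Real.sqrt (2116 * (ε * μ / φ)^2) := by
          apply Real.sqrt_le_sqrt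
          nlinarith [sq_nonneg (ε * μ / φ)]
      _ = 46 * (ε * μ / φ) := by
          rw [show (2116:ℝ) = 46^2 by norm_num, ← mul_pow,
            Real.sqrt_sq (by positivity)]
  have hcross : ∑ p ∈ pairs G, (g p.1 - min (g p.1) (g p.2)) ≤ 23 * (ε * μ / φ) := by
    rw [sum_sub_min_eq_half_abs G g]
    linarith [hX46]
  have hNtotal : ∑ t ∈ Tp g (1/2), gapT g (1/2) t * N t ≤ 25 * ε * μ / φ := by
    rw [hNsum]
    have split : ∑ p ∈ pairs G,
        ((if y p.1 < 0 ∧ y p.2 < 0 then (1:ℝ) else 0) * (min (g p.1) (g p.2) - 1/2)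
        + (if 0 < y p.1 ∧ 0 < y p.2 then (1:ℝ) else 0) * (min (g p.1) (g p.2) - 1/2)
        + (g p.1 - min (g p.1) (g p.2)))
        = ∑ p ∈ pairs G,
          ((if y p.1 < 0 ∧ y p.2 < 0 then (1:ℝ) else 0) * (min (g p.1) (g p.2) - 1/2)
          + (if 0 < y p.1 ∧ 0 < y p.2 then (1:ℝ) else 0) * (min (g p.1) (g p.2) - 1/2))
        + ∑ p ∈ pairs G, (g p.1 - min (g p.1) (g p.2)) := by
      rw [← Finset.sum_add_distrib]
    rw [split]
    have h1 : (1/4 : ℝ) * ∑ p ∈ pairs G, (y p.1 + y p.2)^2 ≤ 2 * ε * μ := by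
      linarith [hQ8]
    have h2 : 2 * ε * μ ≤ 2 * ε * μ / φ := by
      rw [le_div_iff₀ hφ]
      nlinarith [hε, hμ.le, hφ1, hφ]
    have h3 : 23 * (ε * μ / φ) = 23 * ε * μ / φ := by ring
    have h4 : (2:ℝ) * ε * μ / φ + 23 * ε * μ / φ = 25 * ε * μ / φ := by ring
    linarith [hside, hcross]
  -- denominator
  have hvolsum : μ / 8 ≤ ∑ t ∈ Tp g (1/2), gapT g (1/2) t * vol G {v | t ≤ g v} := by
    rw [sweep_vol G hb]
    have step : ∑ v, deg G v * ((1/4) * (if v ∈ {v | 1 ≤ z v} then (1:ℝ) else 0))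
        ≤ ∑ v, deg G v * (g v - 1/2) := by
      refine Finset.sum_le_sum fun v _ => ?_
      simp only [Set.mem_setOf_eq]
      by_cases h : 1 ≤ z v
      · rw [if_pos h]
        have : g v = 3/4 := clampF_of_one_le (by rw [hzdef] at h; simpa using h)
        rw [this]
        have := deg_nonneg G v
        nlinarith
      · rw [if_neg h]
        have h1 := hb v
        have := deg_nonneg G v
        nlinarith
    have e : ∑ v, deg G v * ((1/4) * (if v ∈ {v | 1 ≤ z v} then (1:ℝ) else 0))
        = (1/4) * vol G {v | 1 ≤ z v} := by
      rw [vol_eq_sum, Finset.mul_sum]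
      refine Finset.sum_congr rfl fun v _ => ?_
      ring
    rw [e] at step
    have : μ / 8 ≤ (1/4) * vol G {v | 1 ≤ z v} := by
      have := hmed1
      linarith
    linarith
  -- selection
  obtain ⟨t, ht, hgood⟩ := exists_good_threshold G N (25 * ε * μ / φ) (μ / 8)
    (by positivity) (by positivity) hNtotal hvolsum
  obtain ⟨hbt, v0, hv0⟩ := mem_Tp_iff.1 ht
  have hSne : ({v | t ≤ g v} : Set V).Nonempty := ⟨v0, hv0.ge⟩
  have hvolpos := vol_pos G hdeg hSne
  set L : Set V := {v | y v < 0 ∧ t ≤ g v} with hLdef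
  set R : Set V := {v | 0 < y v ∧ t ≤ g v} with hRdef
  have hLR : L ∪ R = {v | t ≤ g v} := by
    ext v
    simp only [hLdef, hRdef, Set.mem_union, Set.mem_setOf_eq]
    constructor
    · rintro (⟨_, h⟩ | ⟨_, h⟩) <;> exact h
    · intro h
      have habs : 1/2 < |y v| := half_lt_abs_of_clampF hbt h
      have hyne : y v ≠ 0 := by
        intro h0; rw [h0] at habs; simp at habs; linarith
      rcases hyne.lt_or_gt with h' | h'
      · exact Or.inl ⟨h', h⟩
      · exact Or.inr ⟨h', h⟩
  have hdisj : Disjoint L R := by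
    rw [Set.disjoint_left]
    rintro v ⟨h1, _⟩ ⟨h2, _⟩
    linarith
  have hbipR : bipRatio G L R ≤ 200 * ε / φ := by
    rw [bipRatio, eIn, eIn, hLR]
    have hnum : 2 * (eB G L L / 2) + 2 * (eB G R R / 2)
        + eB G {v | t ≤ g v} {v | t ≤ g v}ᶜ = N t := by
      rw [hNdef]; ring
    rw [hnum, div_le_iff₀ hvolpos]
    have hNum_eq : 25 * ε * μ / φ = (200 * ε / φ) * (μ / 8) := by
      field_simp
      ring
    rw [hNum_eq] at hgood
    have hgood2 : N t * (μ/8) ≤ (200 * ε / φ * vol G {v | t ≤ g v}) * (μ/8) := by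
      calc N t * (μ/8) ≤ vol G {v | t ≤ g v} * (200 * ε / φ * (μ / 8)) := hgood
        _ = (200 * ε / φ * vol G {v | t ≤ g v}) * (μ/8) := by ring
    exact le_of_mul_le_mul_right hgood2 (by positivity)
  have hbip := bip_le_bipRatio G hdisj (by rw [hLR]; exact hSne)
  linarith

end MainCase

section Spectral

variable [Fintype V] [DecidableEq V] (G : SimpleGraph V)

lemma vol_univ_eq : vol G Set.univ = ∑ v, deg G v := by
  rw [vol]
  refine Finset.sum_congr ?_ fun _ _ => rfl
  ext v; simp

lemma SDY_pos (hdeg : ∀ v, 1 ≤ deg G v) {y : V → ℝ} (hy : y ≠ 0) :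
    0 < ∑ v, deg G v * (y v)^2 := by
  obtain ⟨v, hv⟩ : ∃ v, y v ≠ 0 := Function.ne_iff.1 hy
  refine Finset.sum_pos' (fun u _ => mul_nonneg (deg_nonneg G u) (sq_nonneg _))
    ⟨v, Finset.mem_univ v, ?_⟩
  have : 0 < (y v)^2 := by positivity
  exact mul_pos (lt_of_lt_of_le one_pos (hdeg v)) this

lemma eigen_quadform (hdeg : ∀ v, 1 ≤ deg G v) {lam : ℝ}
    (h : IsEigenvalue (normLap G) lam) :
    ∃ y : V → ℝ, y ≠ 0 ∧
      ∑ p ∈ pairs G, (y p.1 + y p.2)^2 = 2 * (2 - lam) * ∑ v, deg G v * (y v)^2 := by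
  classical
  obtain ⟨x, hx0, hx⟩ := h
  set sd : V → ℝ := fun v => Real.sqrt (deg G v) with hsd
  have hsdpos : ∀ v, 0 < sd v := fun v => Real.sqrt_pos.2 (by linarith [hdeg v])
  have hsdsq : ∀ v, sd v * sd v = deg G v := fun v =>
    Real.mul_self_sqrt (deg_nonneg G v)
  set y : V → ℝ := fun v => x v / sd v with hy
  have hxy : ∀ v, x v = sd v * y v := by
    intro v; rw [hy]; simp only
    rw [mul_comm, div_mul_cancel₀ (x v) (hsdpos v).ne']
  have hy0 : y ≠ 0 := by
    intro h0
    apply hx0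
    funext v
    have h1 : y v = 0 := congrFun h0 v
    rw [hxy v, h1, mul_zero]
    rfl
  refine ⟨y, hy0, ?_⟩
  -- entry of the matrix
  have hM : ∀ v u, (degInvSqrt G * adjMat G * degInvSqrt G) v u
      = (sd v)⁻¹ * ((if G.Adj v u then (1:ℝ) else 0) * (sd u)⁻¹) := by
    intro v u
    rw [degInvSqrt, Matrix.mul_diagonal, Matrix.diagonal_mul]
    rw [adjMat]
    simp only [Matrix.of_apply, hsd]
    ring
  -- entrywise eigen equation
  have hentry : ∀ v, x v - ∑ u, (sd v)⁻¹ * ((if G.Adj v u then (1:ℝ) else 0)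
      * ((sd u)⁻¹ * x u)) = lam * x v := by
    intro v
    have hv := congrFun hx v
    rw [normLap, Matrix.sub_mulVec, Matrix.one_mulVec] at hv
    have hmv : ((degInvSqrt G * adjMat G * degInvSqrt G) *ᵥ x) v
        = ∑ u, (sd v)⁻¹ * ((if G.Adj v u then (1:ℝ) else 0) * ((sd u)⁻¹ * x u)) := by
      rw [Matrix.mulVec, dotProduct]
      refine Finset.sum_congr rfl fun u _ => ?_
      rw [hM v u]; ring
    rw [Pi.sub_apply, hmv] at hv
    rw [hv]
    simp [Pi.smul_apply, smul_eq_mul]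
  -- multiply by x v and sum
  have hsum : ∑ v, deg G v * (y v)^2 - ∑ v, ∑ u, (if G.Adj v u then (1:ℝ) else 0)
      * (y v * y u) = lam * ∑ v, deg G v * (y v)^2 := by
    have step : ∀ v, x v * (x v - ∑ u, (sd v)⁻¹ * ((if G.Adj v u then (1:ℝ) else 0)
        * ((sd u)⁻¹ * x u))) = x v * (lam * x v) := fun v => by rw [hentry v]
    have hsumstep := Finset.sum_congr rfl (fun v (_ : v ∈ Finset.univ) => step v)
    have e1 : ∀ v, x v * (x v - ∑ u, (sd v)⁻¹ * ((if G.Adj v u then (1:ℝ) else 0)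
        * ((sd u)⁻¹ * x u)))
        = deg G v * (y v)^2 - ∑ u, (if G.Adj v u then (1:ℝ) else 0) * (y v * y u) := by
      intro v
      rw [mul_sub, Finset.mul_sum]
      congr 1
      · rw [hxy v, ← hsdsq v]; ring
      · refine Finset.sum_congr rfl fun u _ => ?_
        rw [hxy v, hxy u]
        have h1 : sd v ≠ 0 := (hsdpos v).ne'
        have h2 : sd u ≠ 0 := (hsdpos u).ne'
        field_simp
    have e2 : ∀ v, x v * (lam * x v) = lam * (deg G v * (y v)^2) := by
      intro v
      rw [hxy v, ← hsdsq v]; ring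
    calc ∑ v, deg G v * (y v)^2 - ∑ v, ∑ u, (if G.Adj v u then (1:ℝ) else 0) * (y v * y u)
        = ∑ v, (deg G v * (y v)^2 - ∑ u, (if G.Adj v u then (1:ℝ) else 0) * (y v * y u)) := by
          rw [Finset.sum_sub_distrib]
      _ = ∑ v, x v * (x v - ∑ u, (sd v)⁻¹ * ((if G.Adj v u then (1:ℝ) else 0)
            * ((sd u)⁻¹ * x u))) := by
          exact Finset.sum_congr rfl fun v _ => (e1 v).symm
      _ = ∑ v, x v * (lam * x v) := hsumstep
      _ = ∑ v, lam * (deg G v * (y v)^2) := Finset.sum_congr rfl fun v _ => e2 v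
      _ = lam * ∑ v, deg G v * (y v)^2 := by rw [Finset.mul_sum]
  have hdouble : ∑ v, ∑ u, (if G.Adj v u then (1:ℝ) else 0) * (y v * y u)
      = ∑ p ∈ pairs G, y p.1 * y p.2 := by
    rw [pairs, Finset.sum_filter, Fintype.sum_prod_type]
    refine Finset.sum_congr rfl fun v _ => Finset.sum_congr rfl fun u _ => ?_
    by_cases h : G.Adj v u <;> simp [h]
  rw [hdouble] at hsum
  have e3 : ∑ p ∈ pairs G, (y p.1)^2 = ∑ v, deg G v * (y v)^2 :=
    sum_pairs_fst G (fun v => (y v)^2)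
  have e4 : ∑ p ∈ pairs G, (y p.2)^2 = ∑ v, deg G v * (y v)^2 :=
    sum_pairs_snd G (fun v => (y v)^2)
  have expand : ∑ p ∈ pairs G, (y p.1 + y p.2)^2
      = ∑ p ∈ pairs G, (y p.1)^2 + ∑ p ∈ pairs G, (y p.2)^2
        + 2 * ∑ p ∈ pairs G, y p.1 * y p.2 := by
    rw [Finset.mul_sum, ← Finset.sum_add_distrib, ← Finset.sum_add_distrib]
    exact Finset.sum_congr rfl fun p _ => by ring
  rw [expand, e3, e4]
  linarith [hsum]

lemma exists_median (hne : Nonempty V) (z : V → ℝ) (hz : ∀ v, 0 ≤ z v) :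
    ∃ c : ℝ, 0 ≤ c ∧ vol G Set.univ / 2 ≤ vol G {v | c ≤ z v} ∧
      vol G {v | c < z v} ≤ vol G Set.univ / 2 := by
  classical
  have hμ0 : 0 ≤ vol G Set.univ := vol_nonneg G _
  obtain ⟨w0⟩ := hne
  have himg : (Finset.image z Finset.univ).Nonempty :=
    ⟨z w0, Finset.mem_image_of_mem z (Finset.mem_univ w0)⟩
  set A := (Finset.image z Finset.univ).filter
    (fun t => vol G Set.univ / 2 ≤ vol G {v | t ≤ z v}) with hA
  have hAne : A.Nonempty := by
    set t0 := (Finset.image z Finset.univ).min' himg with ht0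
    refine ⟨t0, Finset.mem_filter.2 ⟨Finset.min'_mem _ _, ?_⟩⟩
    have huniv : ({v | t0 ≤ z v} : Set V) = Set.univ := by
      ext u
      simp only [Set.mem_setOf_eq, Set.mem_univ, iff_true]
      exact Finset.min'_le _ _ (Finset.mem_image_of_mem z (Finset.mem_univ u))
    rw [huniv]
    linarith
  obtain ⟨hcimg, hcmed⟩ := Finset.mem_filter.1 (Finset.max'_mem A hAne)
  have hc0 : 0 ≤ A.max' hAne := by
    obtain ⟨v, _, hv⟩ := Finset.mem_image.1 hcimg
    rw [← hv]; exact hz v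
  refine ⟨A.max' hAne, hc0, hcmed, ?_⟩
  rcases Set.eq_empty_or_nonempty ({v | A.max' hAne < z v} : Set V) with hgt | hgt
  · have : vol G {v | A.max' hAne < z v} = 0 := by
      rw [vol]
      rw [Finset.sum_congr (s₂ := ∅) ?_ (fun _ _ => rfl), Finset.sum_empty]
      rw [Finset.eq_empty_iff_forall_notMem]
      intro u hu
      rw [Finset.mem_filter] at hu
      have := hu.2
      rw [hgt] at this
      exact this
    linarith
  · obtain ⟨w, hw⟩ := hgt
    have hwmem : z w ∈ (Finset.image z Finset.univ).filter (fun s => A.max' hAne < s) :=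
      Finset.mem_filter.2 ⟨Finset.mem_image_of_mem z (Finset.mem_univ w), hw⟩
    have hfne : ((Finset.image z Finset.univ).filter (fun s => A.max' hAne < s)).Nonempty :=
      ⟨z w, hwmem⟩
    set t1 := ((Finset.image z Finset.univ).filter (fun s => A.max' hAne < s)).min' hfne with ht1
    obtain ⟨ht1img, ht1c⟩ := Finset.mem_filter.1 (Finset.min'_mem _ hfne)
    have hset : ({v | A.max' hAne < z v} : Set V) = {v | t1 ≤ z v} := by
      ext u
      simp only [Set.mem_setOf_eq]
      constructor
      · intro hu
        exact Finset.min'_le _ _ (Finset.mem_filter.2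
          ⟨Finset.mem_image_of_mem z (Finset.mem_univ u), hu⟩)
      · intro hu
        have : A.max' hAne < t1 := ht1c
        linarith
    have ht1nA : t1 ∉ A := by
      intro hmem
      have h2 := Finset.le_max' A t1 hmem
      have h3 : A.max' hAne < t1 := ht1c
      linarith
    have hnot : ¬ (vol G Set.univ / 2 ≤ vol G {v | t1 ≤ z v}) := by
      intro hcontra
      exact ht1nA (Finset.mem_filter.2 ⟨ht1img, hcontra⟩)
    rw [hset]
    linarith [not_le.1 hnot]

end Spectral

set_option maxHeartbeats 1000000 in
/-- There is an absolute constant `C > 0` such that for every finite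
simple graph `G` with minimum degree at least 1 and positive conductance,
`β_G ≤ C (2 - λ_n) / φ_G`, where `λ_n` is the largest eigenvalue of the
normalized Laplacian of `G`. -/
theorem bipartiteness_ratio_upper_bound :
    ∃ C : ℝ, 0 < C ∧
      ∀ (V : Type) [Fintype V] [DecidableEq V] (G : SimpleGraph V),
        (∀ v, 1 ≤ deg G v) →
        0 < conductance G →
        ∀ lam : ℝ, IsEigenvalue (normLap G) lam →
          (∀ mu : ℝ, IsEigenvalue (normLap G) mu → mu ≤ lam) →
          bip G ≤ C * (2 - lam) / conductance G := by
  classical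
  refine ⟨1024, by norm_num, ?_⟩
  intro V _ _ G hdeg hφ lam hlam _
  have hne : Nonempty V := nonempty_of_conductance_pos G hφ
  haveI := hne
  have hφ1 : conductance G ≤ 1 := conductance_le_one G hdeg hne
  obtain ⟨y, hy0, hQeq⟩ := eigen_quadform G hdeg hlam
  have hSDYpos : 0 < ∑ v, deg G v * (y v)^2 := SDY_pos G hdeg hy0
  have hQ0 : (0:ℝ) ≤ ∑ p ∈ pairs G, (y p.1 + y p.2)^2 :=
    Finset.sum_nonneg fun p _ => sq_nonneg _
  have hε0 : 0 ≤ 2 - lam := by nlinarith [hQeq]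
  have hμ : 0 < vol G Set.univ := vol_pos G hdeg Set.univ_nonempty
  obtain ⟨c, hc0, hmed1, hmed2⟩ :=
    exists_median G hne (fun v => |y v|) (fun v => abs_nonneg _)
  by_cases hcase : c^2 * vol G Set.univ ≤ (∑ v, deg G v * (y v)^2) / 4
  · -- Trevisan route
    have hzc : vol G {v | |y v| < c} ≤ vol G Set.univ / 2 := by
      have hcompl : ({v | c ≤ |y v|} : Set V)ᶜ = {v | |y v| < c} := by
        ext v; simp [not_le]
      have := vol_add_compl G {v | c ≤ |y v|}
      rw [hcompl] at this
      linarith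
    have hpoin := poincare G hdeg (fun v => |y v|) c hmed2 hzc
    have hlow : (∑ v, deg G v * (y v)^2)/4 ≤ ∑ v, deg G v * (|y v| - c)^2 := by
      have pointwise : ∀ v ∈ Finset.univ, deg G v * ((y v)^2/2 - c^2)
          ≤ deg G v * (|y v| - c)^2 := by
        intro v _
        have h1 := deg_nonneg G v
        have h2 : (y v)^2 = |y v|^2 := (sq_abs _).symm
        nlinarith [sq_nonneg (|y v| - 2*c)]
      have hsum := Finset.sum_le_sum pointwise
      have e : ∑ v, deg G v * ((y v)^2/2 - c^2)
          = (∑ v, deg G v * (y v)^2)/2 - c^2 * vol G Set.univ := by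
        calc ∑ v, deg G v * ((y v)^2/2 - c^2)
            = ∑ v, (deg G v * (y v)^2/2 - c^2 * deg G v) :=
              Finset.sum_congr rfl fun v _ => by ring
          _ = (∑ v, deg G v * (y v)^2)/2 - c^2 * ∑ v, deg G v := by
              rw [Finset.sum_sub_distrib, ← Finset.sum_div, ← Finset.mul_sum]
          _ = _ := by rw [vol_univ_eq]
      rw [e] at hsum
      linarith
    have hzz : ∑ p ∈ pairs G, (|y p.1| - |y p.2|)^2 ≤ ∑ p ∈ pairs G, (y p.1 + y p.2)^2 :=
      Finset.sum_le_sum fun p _ => sq_abs_sub_le_sq_add (y p.1) (y p.2)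
    have hphi2 : conductance G ^2 ≤ 8*(2-lam) := by
      have h1 : conductance G^2 * ((∑ v, deg G v * (y v)^2)/4)
          ≤ 2*(2-lam)*∑ v, deg G v * (y v)^2 := by
        calc conductance G^2 * ((∑ v, deg G v * (y v)^2)/4)
            ≤ conductance G^2 * ∑ v, deg G v * (|y v| - c)^2 :=
              mul_le_mul_of_nonneg_left hlow (sq_nonneg _)
          _ ≤ ∑ p ∈ pairs G, (|y p.1| - |y p.2|)^2 := hpoin
          _ ≤ ∑ p ∈ pairs G, (y p.1 + y p.2)^2 := hzz
          _ = 2*(2-lam)*∑ v, deg G v * (y v)^2 := hQeq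
      nlinarith [hSDYpos]
    have htrev := trevisan G hdeg y hy0 (2-lam) (le_of_eq hQeq)
    have hsq : Real.sqrt (8*(2-lam)) ≤ 8*(2-lam)/conductance G := by
      have hφle : conductance G ≤ Real.sqrt (8*(2-lam)) := by
        rw [show conductance G = Real.sqrt (conductance G^2) from
          (Real.sqrt_sq hφ.le).symm]
        exact Real.sqrt_le_sqrt hphi2
      rw [le_div_iff₀ hφ]
      calc Real.sqrt (8*(2-lam)) * conductance G
          ≤ Real.sqrt (8*(2-lam)) * Real.sqrt (8*(2-lam)) :=
            mul_le_mul_of_nonneg_left hφle (Real.sqrt_nonneg _)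
        _ = 8*(2-lam) := Real.mul_self_sqrt (by positivity)
    have hfinal : 8*(2-lam)/conductance G ≤ 1024*(2-lam)/conductance G :=
      div_le_div_of_nonneg_right (by nlinarith) hφ.le
    linarith
  · -- main route
    push_neg at hcase
    have hcpos : 0 < c := by
      rcases hc0.lt_or_eq with h | h
      · exact h
      · exfalso
        rw [← h] at hcase
        simp only [ne_eq, OfNat.ofNat_ne_zero, not_false_eq_true, zero_pow,
          zero_mul] at hcase
        nlinarith
    set Y : V → ℝ := fun v => y v / c with hY
    have hc2 : (0:ℝ) < c^2 := by positivity
    have e2 : ∑ v, deg G v * (Y v)^2 = (∑ v, deg G v * (y v)^2)/c^2 := by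
      rw [Finset.sum_div]
      refine Finset.sum_congr rfl fun v _ => ?_
      rw [hY]
      simp only
      field_simp
    have e1 : ∑ p ∈ pairs G, (Y p.1 + Y p.2)^2
        = (∑ p ∈ pairs G, (y p.1 + y p.2)^2)/c^2 := by
      rw [Finset.sum_div]
      refine Finset.sum_congr rfl fun p _ => ?_
      rw [hY]
      simp only
      field_simp
    have hQY : ∑ p ∈ pairs G, (Y p.1 + Y p.2)^2
        ≤ 2*(2-lam)*∑ v, deg G v * (Y v)^2 := by
      rw [e1, e2, hQeq]
      apply le_of_eq
      field_simp
    have habsY : ∀ v, |Y v| = |y v|/c := fun v => by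
      rw [hY]; simp only; rw [abs_div, abs_of_pos hcpos]
    have hmed1Y : vol G Set.univ/2 ≤ vol G {v | 1 ≤ |Y v|} := by
      rw [show ({v | 1 ≤ |Y v|} : Set V) = {v | c ≤ |y v|} from ?_]
      · exact hmed1
      · ext v
        rw [Set.mem_setOf_eq, Set.mem_setOf_eq, habsY v, le_div_iff₀ hcpos, one_mul]
    have hmed2Y : vol G {v | 1 < |Y v|} ≤ vol G Set.univ/2 := by
      rw [show ({v | 1 < |Y v|} : Set V) = {v | c < |y v|} from ?_]
      · exact hmed2
      · ext v
        rw [Set.mem_setOf_eq, Set.mem_setOf_eq, habsY v, lt_div_iff₀ hcpos, one_mul]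
    have hnormY : ∑ v, deg G v * (Y v)^2 ≤ 4 * vol G Set.univ := by
      rw [e2, div_le_iff₀ hc2]
      nlinarith [hcase]
    have hmain := maincase G hdeg hφ hφ1 hμ Y (2-lam) hε0 hQY hmed1Y hmed2Y hnormY
    have hfinal : 200*(2-lam)/conductance G ≤ 1024*(2-lam)/conductance G :=
      div_le_div_of_nonneg_right (by nlinarith) hφ.le
    linarith
end Sublinear
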